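/- arXiv:1311.0499 — 2 statements merged into one kernel-verified Lean document; each statement's English description precedes it below -/
import Mathlib

section
/- Rieger's theorem: For every cyclically ordered group (G,R) there exist a totally ordered group (F,\leq) and a positive element z \in F which is central and cofinal, such that (G,R) is isomorphic as a cyclically ordered group to the wound-round group F/\langle z \rangle. -/
/-- A cyclically ordered group: a ternary relation satisfying R1-R5. -/
def IsCyclicOrder {G : Type*} [Group G] (R : G → G → G → Prop) : Prop :=
  (∀ x y z : G, R x y z → x ≠ y ∧ y ≠ z ∧ z ≠ x) ∧
  (∀ x y z : G, x ≠ y → y ≠ z → z ≠ x → R x y z ∨ R x z y) ∧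
  (∀ x y z : G, R x y z → R y z x) ∧
  (∀ x y z u : G, R x y z → R y u z → R x u z) ∧
  (∀ x y z u v : G, R x y z → R (u * x * v) (u * y * v) (u * z * v))

/-- Witness for Rieger's theorem: a totally ordered group `F` (bi-invariant
linear order), a positive central cofinal element `z`, and a surjective group
homomorphism `φ : F → G` with kernel `⟨z⟩` such that the cyclic order `R` on
`G ≅ F/⟨z⟩` is the winding cyclic order. -/
structure RiegerWitness (G : Type u) [Group G] (R : G → G → G → Prop) :
    Type (u + 1) where
  F : Type u
  [grp : Group F]
  [lin : LinearOrder F]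
  mul_lt_mul : ∀ a b c d : F, a < b → c * a * d < c * b * d
  z : F
  one_lt_z : 1 < z
  central : ∀ f : F, z * f = f * z
  cofinal : ∀ f : F, ∃ n : ℤ, f ≤ z ^ n
  φ : F →* G
  surj : Function.Surjective φ
  ker : ∀ f : F, φ f = 1 ↔ ∃ n : ℤ, f = z ^ n
  winding : ∀ a b c : G, R a b c ↔
    ∃ a' b' c' : F, φ a' = a ∧ φ b' = b ∧ φ c' = c ∧
      1 ≤ a' ∧ a' < z ∧ 1 ≤ b' ∧ b' < z ∧ 1 ≤ c' ∧ c' < z ∧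
      ((a' < b' ∧ b' < c') ∨ (b' < c' ∧ c' < a') ∨ (c' < a' ∧ a' < b'))

/-!
Cutting the circle at `1` makes a cyclically ordered group `G` a linearly ordered set with least
element `1`; think of it as `[0, 1)`. A product `g * h` then either stays in `[0, 1)` or wraps
around once, and the carry `c(g, h) ∈ {0, 1}` records which. On `ℤ × G` with the twisted
product `(m, g) (n, h) = (m + n + c(g, h), g h)` and the lexicographic order, left and right
translations are strictly monotone by the invariance of the cyclic order; monotonicity of left
translations alone forces the cocycle identity, so this is a totally ordered group. The element
`(1, 1)` is central and cofinal, and `[1, (1, 1))` is `{0} × G` carrying the cut order, from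
which the cyclic order is recovered. For right translations one needs `g h < g ↔ g h < h` in
the cut order, which comes from inversion reversing the cyclic order.
-/

/-- `CutLT R o` is the linear order obtained by cutting the circle at `o`. -/
def CutLT {G : Type*} (R : G → G → G → Prop) (o a b : G) : Prop :=
  (a = o ∧ b ≠ o) ∨ R o a b

namespace IsCyclicOrder

variable {G : Type*} [Group G] {R : G → G → G → Prop} (hR : IsCyclicOrder R)
include hR

theorem distinct {x y z : G} (h : R x y z) : x ≠ y ∧ y ≠ z ∧ z ≠ x := hR.1 x y z h

theorem rel_or_rel {x y z : G} (hxy : x ≠ y) (hyz : y ≠ z) (hzx : z ≠ x) :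
    R x y z ∨ R x z y :=
  hR.2.1 x y z hxy hyz hzx

theorem rotate {x y z : G} (h : R x y z) : R y z x := hR.2.2.1 x y z h

theorem trans {x y z u : G} (h₁ : R x y z) (h₂ : R x z u) : R x y u :=
  hR.rotate <| hR.rotate <| hR.2.2.2.1 _ _ _ _ (hR.rotate h₁) (hR.rotate h₂)

theorem asymm {x y z : G} (h₁ : R x y z) (h₂ : R x z y) : False :=
  (hR.distinct (hR.2.2.2.1 _ _ _ _ h₁ (hR.rotate (hR.rotate h₂)))).1 rfl

theorem mul_left (u : G) {x y z : G} (h : R x y z) : R (u * x) (u * y) (u * z) := by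
  simpa using hR.2.2.2.2 x y z u 1 h

theorem mul_right (w : G) {x y z : G} (h : R x y z) : R (x * w) (y * w) (z * w) := by
  simpa using hR.2.2.2.2 x y z 1 w h

theorem inv_rev {x y : G} (h : R 1 x y) : R 1 y⁻¹ x⁻¹ := by
  have half {a b : G} (hab : R 1 a b) (hab' : R 1 a⁻¹ b⁻¹) : R 1 a a⁻¹ := by
    have h₁ : R 1 b (a⁻¹ * b) := hR.rotate (hR.rotate (by simpa using hR.mul_right b hab'))
    have h₂ : R 1 (a⁻¹ * b) a⁻¹ := hR.rotate (by simpa using hR.mul_left a⁻¹ hab)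
    exact hR.trans hab (hR.trans h₁ h₂)
  obtain ⟨h1x, hxy, hy1⟩ := hR.distinct h
  refine (hR.rel_or_rel (inv_ne_one.2 hy1).symm (inv_injective.ne hxy.symm)
    (inv_ne_one.2 h1x.symm)).resolve_right fun h' => ?_
  exact hR.asymm (half h h') (by simpa using half h' (by simpa using h))

theorem cutLT_irrefl (o a : G) : ¬ CutLT R o a a := by
  rintro (⟨rfl, h⟩ | h)
  · exact h rfl
  · exact (hR.distinct h).2.1 rfl

theorem not_cutLT_base (o a : G) : ¬ CutLT R o a o := by
  rintro (⟨_, h⟩ | h)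
  · exact h rfl
  · exact (hR.distinct h).2.2 rfl

theorem cutLT_base_iff {o b : G} : CutLT R o o b ↔ b ≠ o := by
  refine ⟨?_, fun h => Or.inl ⟨rfl, h⟩⟩
  rintro (⟨-, h⟩ | h)
  · exact h
  · exact absurd rfl (hR.distinct h).1

theorem cutLT_trans {o a b c : G} (hab : CutLT R o a b) (hbc : CutLT R o b c) :
    CutLT R o a c := by
  rcases hab with ⟨rfl, hb⟩ | hab <;> rcases hbc with ⟨rfl, -⟩ | hbc
  · exact absurd rfl hb
  · exact Or.inl ⟨rfl, (hR.distinct hbc).2.2⟩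
  · exact absurd rfl (hR.distinct hab).2.2
  · exact Or.inr (hR.trans hab hbc)

theorem cutLT_asymm {o a b : G} (hab : CutLT R o a b) (hba : CutLT R o b a) : False :=
  hR.cutLT_irrefl o a (hR.cutLT_trans hab hba)

theorem cutLT_or_cutLT {o a b : G} (hab : a ≠ b) : CutLT R o a b ∨ CutLT R o b a := by
  by_cases ha : a = o
  · exact Or.inl (Or.inl ⟨ha, ha ▸ hab.symm⟩)
  by_cases hb : b = o
  · exact Or.inr (Or.inl ⟨hb, hb ▸ hab⟩)
  exact (hR.rel_or_rel (Ne.symm ha) hab hb).imp Or.inr Or.inr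

theorem cutLT_of_cutLT_of_not_cutLT {o a b u : G} (hau : CutLT R o a u)
    (hbu : ¬ CutLT R o b u) : CutLT R o a b := by
  obtain rfl | hb := eq_or_ne b u
  · exact hau
  exact (hR.cutLT_or_cutLT hb).resolve_left hbu |> hR.cutLT_trans hau

theorem rel_of_cutLT_of_cutLT {o a b c : G} (hab : CutLT R o a b) (hbc : CutLT R o b c) :
    R a b c := by
  rcases hab with ⟨rfl, hb⟩ | hab <;> rcases hbc with ⟨rfl, -⟩ | hbc
  · exact absurd rfl hb
  · exact hbc
  · exact absurd rfl (hR.distinct hab).2.2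
  have hac := hR.trans hab hbc
  refine (hR.rel_or_rel (hR.distinct hab).2.1 (hR.distinct hbc).2.1
    (hR.distinct hac).2.1.symm).resolve_right fun hacb => ?_
  exact hR.asymm (hR.trans (hR.rotate (hR.rotate hacb)) (hR.rotate hbc))
    (hR.rotate (hR.rotate hab))

theorem rel_iff_cutLT (o : G) {a b c : G} :
    R a b c ↔ CutLT R o a b ∧ CutLT R o b c ∨ CutLT R o b c ∧ CutLT R o c a ∨
      CutLT R o c a ∧ CutLT R o a b := by
  refine ⟨fun h => ?_, ?_⟩
  · obtain ⟨hab, hbc, hca⟩ := hR.distinct h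
    have not_rev {x y z} (hxy : CutLT R o x y) (hyz : CutLT R o y z) : ¬ R z y x := fun hzyx =>
      hR.asymm (hR.rotate (hR.rotate (hR.rel_of_cutLT_of_cutLT hxy hyz))) hzyx
    rcases hR.cutLT_or_cutLT (o := o) hab with hab | hba <;>
      rcases hR.cutLT_or_cutLT (o := o) hbc with hbc | hcb <;>
      rcases hR.cutLT_or_cutLT (o := o) hca with hca | hac
    · exact Or.inl ⟨hab, hbc⟩
    · exact Or.inl ⟨hab, hbc⟩
    · exact Or.inr (Or.inr ⟨hca, hab⟩)
    · exact absurd h (fun h => not_rev hac hcb (hR.rotate h))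
    · exact Or.inr (Or.inl ⟨hbc, hca⟩)
    · exact absurd h (fun h => not_rev hba hac (hR.rotate (hR.rotate h)))
    · exact absurd h (not_rev hcb hba)
    · exact absurd h (not_rev hcb hba)
  · rintro (⟨h₁, h₂⟩ | ⟨h₁, h₂⟩ | ⟨h₁, h₂⟩)
    · exact hR.rel_of_cutLT_of_cutLT h₁ h₂
    · exact hR.rotate (hR.rotate (hR.rel_of_cutLT_of_cutLT h₁ h₂))
    · exact hR.rotate (hR.rel_of_cutLT_of_cutLT h₁ h₂)

theorem cutLT_mul_left (u : G) {o a b : G} (h : CutLT R o a b) :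
    CutLT R (u * o) (u * a) (u * b) := by
  rcases h with ⟨rfl, hb⟩ | h
  · exact Or.inl ⟨rfl, fun e => hb (mul_left_cancel e)⟩
  · exact Or.inr (hR.mul_left u h)

theorem cutLT_mul_right (w : G) {o a b : G} (h : CutLT R o a b) :
    CutLT R (o * w) (a * w) (b * w) := by
  rcases h with ⟨rfl, hb⟩ | h
  · exact Or.inl ⟨rfl, fun e => hb (mul_right_cancel e)⟩
  · exact Or.inr (hR.mul_right w h)

theorem cutLT_mul_iff (g h : G) : CutLT R 1 (g * h) g ↔ CutLT R 1 (g * h) h := by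
  obtain hgh | hgh := eq_or_ne (g * h) 1
  · rw [hgh, hR.cutLT_base_iff, hR.cutLT_base_iff, eq_inv_of_mul_eq_one_right hgh, inv_ne_one]
  simp only [CutLT, hgh, false_and, false_or]
  calc R 1 (g * h) g ↔ R 1 g⁻¹ h :=
        ⟨fun e => hR.rotate (hR.rotate (by simpa using hR.mul_left g⁻¹ e)),
          fun e => hR.rotate (by simpa using hR.mul_left g e)⟩
    _ ↔ R 1 h⁻¹ g :=
        ⟨fun e => by simpa using hR.inv_rev e, fun e => by simpa using hR.inv_rev e⟩
    _ ↔ R 1 (g * h) h :=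
        ⟨fun e => hR.rotate (by simpa using hR.mul_right h e),
          fun e => hR.rotate (hR.rotate (by simpa using hR.mul_right h⁻¹ e))⟩

end IsCyclicOrder

section Carry

variable {G : Type*} [Group G] (R : G → G → G → Prop)

open Classical in
noncomputable def wrap (u a : G) : ℤ := if CutLT R 1 a u then 1 else 0

/-- Identifying `G` with `[0, 1)` through the cut at `1`, `carry R g h` is the integer part of
`g + h`. -/
noncomputable def carry (g h : G) : ℤ := wrap R g (g * h)

variable {R}

theorem carry_eq_wrap_right (hR : IsCyclicOrder R) (g h : G) :
    carry R g h = wrap R h (g * h) :=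
  open Classical in if_congr (hR.cutLT_mul_iff g h) rfl rfl

theorem carry_one_left (hR : IsCyclicOrder R) (g : G) : carry R 1 g = 0 := by
  simp [carry, wrap, hR.not_cutLT_base]

theorem carry_one_right (hR : IsCyclicOrder R) (g : G) : carry R g 1 = 0 := by
  simp [carry, wrap, hR.cutLT_irrefl]

theorem carry_inv_left (hR : IsCyclicOrder R) (g : G) : carry R g⁻¹ g = carry R g g⁻¹ := by
  rw [carry_eq_wrap_right hR, carry, inv_mul_cancel, mul_inv_cancel]

end Carry

/-- The unwinding `ℤ ×_carry G`: `⟨n, g⟩` stands for `n` full turns followed by `g`. -/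
@[ext]
structure Unwinding {G : Type*} (R : G → G → G → Prop) where
  n : ℤ
  g : G

namespace Unwinding

variable {G : Type*} [Group G] {R : G → G → G → Prop}

noncomputable instance : Mul (Unwinding R) :=
  ⟨fun x y => ⟨x.n + y.n + carry R x.g y.g, x.g * y.g⟩⟩

instance : One (Unwinding R) := ⟨⟨0, 1⟩⟩

noncomputable instance : Inv (Unwinding R) :=
  ⟨fun x => ⟨-x.n - carry R x.g x.g⁻¹, x.g⁻¹⟩⟩

theorem mul_def (x y : Unwinding R) : x * y = ⟨x.n + y.n + carry R x.g y.g, x.g * y.g⟩ := rfl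

theorem one_def : (1 : Unwinding R) = ⟨0, 1⟩ := rfl

theorem inv_def (x : Unwinding R) : x⁻¹ = ⟨-x.n - carry R x.g x.g⁻¹, x.g⁻¹⟩ := rfl

def turn : Unwinding R := ⟨1, 1⟩

def Lt (x y : Unwinding R) : Prop := x.n < y.n ∨ x.n = y.n ∧ CutLT R 1 x.g y.g

variable [Fact (IsCyclicOrder R)]

instance : IsStrictTotalOrder (Unwinding R) Lt :=
  have hR : IsCyclicOrder R := Fact.out
  { trichotomous := fun x y hxy hyx => by
      have hn : x.n = y.n := by simp only [Lt, not_or] at hxy hyx; omega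
      refine Unwinding.ext hn (by_contra fun hg => ?_)
      exact (hR.cutLT_or_cutLT hg).elim
        (hxy <| Or.inr ⟨hn, ·⟩) (hyx <| Or.inr ⟨hn.symm, ·⟩)
    irrefl := fun x h => h.elim (lt_irrefl x.n) fun h => hR.cutLT_irrefl 1 x.g h.2
    trans := fun x y z => by
      rintro (hxy | ⟨exy, hxy⟩) (hyz | ⟨eyz, hyz⟩)
      · exact Or.inl (hxy.trans hyz)
      · exact Or.inl (eyz ▸ hxy)
      · exact Or.inl (exy ▸ hyz)
      · exact Or.inr ⟨exy.trans eyz, hR.cutLT_trans hxy hyz⟩ }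

noncomputable instance : LinearOrder (Unwinding R) := by
  classical exact linearOrderOfSTO Lt

theorem lt_def {x y : Unwinding R} : x < y ↔ x.n < y.n ∨ x.n = y.n ∧ CutLT R 1 x.g y.g :=
  Iff.rfl

theorem mk_add_wrap_lt_of_lt {m m' : ℤ} (h : m < m') (u a b : G) :
    (⟨m + wrap R u a, a⟩ : Unwinding R) < ⟨m' + wrap R u b, b⟩ := by
  have hR : IsCyclicOrder R := Fact.out
  simp only [lt_def, wrap]
  split_ifs with ha hb hb
  · exact Or.inl (by omega)
  · obtain hm | rfl := (Int.add_one_le_iff.2 h).lt_or_eq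
    · exact Or.inl (by omega)
    · exact Or.inr ⟨by ring, hR.cutLT_of_cutLT_of_not_cutLT ha hb⟩
  · exact Or.inl (by omega)
  · exact Or.inl (by omega)

/-- Read from `1` instead of `u`, the points lying before `u` come one turn later. -/
theorem mk_add_wrap_lt_of_cutLT (m : ℤ) {u a b : G} (h : CutLT R u a b) :
    (⟨m + wrap R u a, a⟩ : Unwinding R) < ⟨m + wrap R u b, b⟩ := by
  have hR : IsCyclicOrder R := Fact.out
  have hbu : b ≠ u := h.elim (·.2) fun h => (hR.distinct h).2.2
  have hrev : R u b a → a = u := fun hba => h.elim (·.1) fun hab => (hR.asymm hab hba).elim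
  have hab : a ≠ b := by rintro rfl; exact hR.cutLT_irrefl u a h
  simp only [lt_def, wrap]
  split_ifs with ha hb hb
  · refine Or.inr ⟨rfl, (hR.cutLT_or_cutLT hab).resolve_right fun hba => ?_⟩
    refine hR.cutLT_irrefl 1 u (hrev ?_ ▸ ha)
    exact hR.rotate (hR.rotate (hR.rel_of_cutLT_of_cutLT hba ha))
  · refine absurd (hrev ?_ ▸ ha) (hR.cutLT_irrefl 1 u)
    exact hR.rotate (hR.rel_of_cutLT_of_cutLT ha ((hR.cutLT_or_cutLT hbu.symm).resolve_right hb))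
  · exact Or.inl (by omega)
  · refine Or.inr ⟨rfl, (hR.cutLT_or_cutLT hab).resolve_right fun hba => ?_⟩
    refine hb (hrev ?_ ▸ hba)
    exact hR.rel_of_cutLT_of_cutLT ((hR.cutLT_or_cutLT hbu.symm).resolve_right hb) hba

theorem mk_add_wrap_lt {u : G} {σ : G → G}
    (hσ : ∀ {a b}, CutLT R 1 a b → CutLT R u (σ a) (σ b)) (k : ℤ) {x y : Unwinding R}
    (h : x < y) :
    (⟨k + x.n + wrap R u (σ x.g), σ x.g⟩ : Unwinding R) <
      ⟨k + y.n + wrap R u (σ y.g), σ y.g⟩ := by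
  rcases h with h | ⟨e, h⟩
  · exact mk_add_wrap_lt_of_lt (by omega) _ _ _
  · rw [e]
    exact mk_add_wrap_lt_of_cutLT _ (hσ h)

instance : MulLeftStrictMono (Unwinding R) where
  elim x _ _ h :=
    mk_add_wrap_lt (fun h => by simpa using (Fact.out : IsCyclicOrder R).cutLT_mul_left x.g h) x.n h

instance : MulRightStrictMono (Unwinding R) where
  elim w x y h := by
    have hR : IsCyclicOrder R := Fact.out
    have := mk_add_wrap_lt (fun h => by simpa using hR.cutLT_mul_right w.g h) w.n h
    change (⟨x.n + w.n + carry R x.g w.g, x.g * w.g⟩ : Unwinding R) <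
      ⟨y.n + w.n + carry R y.g w.g, y.g * w.g⟩
    rwa [carry_eq_wrap_right hR, carry_eq_wrap_right hR, add_comm x.n, add_comm y.n]

theorem one_le_mk_zero (g : G) : (1 : Unwinding R) ≤ ⟨0, g⟩ := by
  obtain rfl | hg := eq_or_ne g 1
  · exact le_rfl
  · exact le_of_lt (Or.inr ⟨rfl, (Fact.out : IsCyclicOrder R).cutLT_base_iff.2 hg⟩)

theorem mk_zero_lt_turn (g : G) : (⟨0, g⟩ : Unwinding R) < turn := Or.inl zero_lt_one

theorem eq_add_carry_of_le_of_lt {m n : ℤ} {a b : G}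
    (h₁ : (⟨m, a⟩ : Unwinding R) ≤ ⟨n, a * b⟩)
    (h₂ : (⟨n, a * b⟩ : Unwinding R) < ⟨m + 1, a⟩) : n = m + carry R a b := by
  have hR : IsCyclicOrder R := Fact.out
  rw [le_iff_lt_or_eq, lt_def, Unwinding.mk.injEq] at h₁
  rw [lt_def] at h₂
  dsimp only at h₁ h₂
  simp only [carry, wrap]
  split_ifs with hw
  · refine h₂.elim (fun h₂ => ?_) (·.1)
    rcases h₁ with (h₁ | ⟨-, h₁⟩) | ⟨-, h₁⟩
    · omega
    · exact (hR.cutLT_asymm h₁ hw).elim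
    · rw [← h₁] at hw
      exact (hR.cutLT_irrefl 1 a hw).elim
  · refine h₂.elim (fun h₂ => ?_) fun h₂ => absurd h₂.2 hw
    rcases h₁ with (h₁ | ⟨h₁, -⟩) | ⟨h₁, -⟩ <;> omega

end Unwinding

/-- Left multiplication is monotone before associativity is known, so it squeezes
`⟨0, g⟩ * (⟨0, h⟩ * ⟨0, k⟩)` between `⟨carry R g h, g * h⟩` and one turn later. -/
theorem carry_cocycle {G : Type*} [Group G] {R : G → G → G → Prop} [Fact (IsCyclicOrder R)]
    (g h k : G) : carry R g h + carry R (g * h) k = carry R h k + carry R g (h * k) := by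
  have hR : IsCyclicOrder R := Fact.out
  have mono (x : Unwinding R) : StrictMono (x * ·) := fun _ _ h => mul_lt_mul_right h x
  have hle := (mono ⟨0, g⟩).monotone ((mono ⟨0, h⟩).monotone (Unwinding.one_le_mk_zero k))
  have hlt := mono ⟨0, g⟩ (mono ⟨0, h⟩ (Unwinding.mk_zero_lt_turn k))
  simp only [Unwinding.mul_def, Unwinding.one_def, Unwinding.turn, carry_one_right hR, mul_one,
    ← mul_assoc, zero_add, add_zero] at hle hlt
  rw [add_comm 1] at hlt
  linarith [Unwinding.eq_add_carry_of_le_of_lt hle hlt]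

namespace Unwinding

variable {G : Type*} [Group G] {R : G → G → G → Prop} [Fact (IsCyclicOrder R)]

noncomputable instance : Group (Unwinding R) :=
  have hR : IsCyclicOrder R := Fact.out
  Group.ofLeftAxioms
    (fun x y z => by
      ext
      · simp only [mul_def]
        linarith [carry_cocycle (R := R) x.g y.g z.g]
      · exact mul_assoc x.g y.g z.g)
    (fun x => by ext <;> simp [mul_def, one_def, carry_one_left hR])
    (fun x => by
      ext
      · simp only [mul_def, inv_def, one_def, carry_inv_left hR]
        ring
      · exact inv_mul_cancel x.g)

theorem turn_zpow (k : ℤ) : (turn : Unwinding R) ^ k = ⟨k, 1⟩ := by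
  have hR : IsCyclicOrder R := Fact.out
  induction k using Int.induction_on with
  | zero => rfl
  | succ i ih =>
    rw [zpow_add_one, ih]
    ext <;> simp [mul_def, turn, carry_one_left hR]
  | pred i ih =>
    rw [zpow_sub_one, ih]
    ext
    · simp [mul_def, inv_def, turn, carry_one_left hR]
      ring
    · simp [mul_def, inv_def, turn]

theorem turn_mul_comm (x : Unwinding R) : turn * x = x * turn := by
  have hR : IsCyclicOrder R := Fact.out
  ext <;> simp [mul_def, turn, carry_one_left hR, carry_one_right hR, add_comm]

theorem one_lt_turn : (1 : Unwinding R) < turn := mk_zero_lt_turn 1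

theorem le_turn_zpow (x : Unwinding R) : x ≤ turn ^ (x.n + 1) := by
  rw [turn_zpow]
  exact le_of_lt (Or.inl (lt_add_one x.n))

def proj : Unwinding R →* G where
  toFun := g
  map_one' := rfl
  map_mul' _ _ := rfl

theorem proj_surjective : Function.Surjective (proj : Unwinding R → G) :=
  fun g => ⟨⟨0, g⟩, rfl⟩

theorem proj_eq_one_iff (x : Unwinding R) : proj x = 1 ↔ ∃ k : ℤ, x = turn ^ k := by
  simp only [turn_zpow]
  exact ⟨fun h => ⟨x.n, Unwinding.ext rfl h⟩, by rintro ⟨k, rfl⟩; rfl⟩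

theorem one_le_and_lt_turn_iff {x : Unwinding R} :
    1 ≤ x ∧ x < turn ↔ ∃ g, x = ⟨0, g⟩ := by
  refine ⟨fun ⟨h₁, h₂⟩ => ⟨x.g, Unwinding.ext ?_ rfl⟩, ?_⟩
  · have : 0 ≤ x.n := by
      rcases h₁.lt_or_eq with h₁ | rfl
      · exact h₁.elim le_of_lt (·.1.le)
      · rfl
    have : x.n < 1 :=
      h₂.elim id fun h => absurd h.2 ((Fact.out : IsCyclicOrder R).not_cutLT_base 1 _)
    exact le_antisymm (Int.lt_add_one_iff.1 this) ‹_›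
  · rintro ⟨g, rfl⟩
    exact ⟨one_le_mk_zero g, mk_zero_lt_turn g⟩

theorem mk_zero_lt_mk_zero_iff {a b : G} :
    (⟨0, a⟩ : Unwinding R) < ⟨0, b⟩ ↔ CutLT R 1 a b := by
  simp [lt_def]

theorem rel_iff_exists_lift (a b c : G) : R a b c ↔
    ∃ a' b' c' : Unwinding R, proj a' = a ∧ proj b' = b ∧ proj c' = c ∧
      1 ≤ a' ∧ a' < turn ∧ 1 ≤ b' ∧ b' < turn ∧ 1 ≤ c' ∧ c' < turn ∧
      ((a' < b' ∧ b' < c') ∨ (b' < c' ∧ c' < a') ∨ (c' < a' ∧ a' < b')) := by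
  have hR : IsCyclicOrder R := Fact.out
  constructor
  · intro h
    refine ⟨⟨0, a⟩, ⟨0, b⟩, ⟨0, c⟩, rfl, rfl, rfl,
      one_le_mk_zero a, mk_zero_lt_turn a, one_le_mk_zero b, mk_zero_lt_turn b,
      one_le_mk_zero c, mk_zero_lt_turn c, ?_⟩
    simpa only [mk_zero_lt_mk_zero_iff] using (hR.rel_iff_cutLT 1).1 h
  · rintro ⟨a', b', c', rfl, rfl, rfl, ha₁, ha₂, hb₁, hb₂, hc₁, hc₂, h⟩
    obtain ⟨a, rfl⟩ := one_le_and_lt_turn_iff.1 ⟨ha₁, ha₂⟩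
    obtain ⟨b, rfl⟩ := one_le_and_lt_turn_iff.1 ⟨hb₁, hb₂⟩
    obtain ⟨c, rfl⟩ := one_le_and_lt_turn_iff.1 ⟨hc₁, hc₂⟩
    simp only [mk_zero_lt_mk_zero_iff] at h
    exact (hR.rel_iff_cutLT 1).2 h

end Unwinding

/-- Rieger's theorem: every cyclically ordered group is the wound-round group
`F/⟨z⟩` of a totally ordered group `F` with `z` positive, central and cofinal. -/
theorem rieger {G : Type u} [Group G] (R : G → G → G → Prop)
    (hR : IsCyclicOrder R) : Nonempty (RiegerWitness G R) := by
  have : Fact (IsCyclicOrder R) := ⟨hR⟩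
  exact ⟨{
    F := Unwinding R
    mul_lt_mul := fun _ _ c d h => mul_lt_mul_left (mul_lt_mul_right h c) d
    z := Unwinding.turn
    one_lt_z := Unwinding.one_lt_turn
    central := Unwinding.turn_mul_comm
    cofinal := fun x => ⟨x.n + 1, Unwinding.le_turn_zpow x⟩
    φ := Unwinding.proj
    surj := Unwinding.proj_surjective
    ker := Unwinding.proj_eq_one_iff
    winding := Unwinding.rel_iff_exists_lift }⟩
end

section
/- Lexicographic product: if (C,R) is a cyclically ordered group and (L,\leq) a totally ordered group, then the relation R' on C \times L defined by R'((c,r),(c',r'),(c'',r'')) iff (R(c,c',c'') or (c=c'\neq c'' and r<r') or (c\neq c'=c'' and r'<r'') or (c=c''\neq c' and r''<r) or (c=c'=c'' and (r<r'<r'' or r'<r''<r or r''<r<r'))) makes C \times L a cyclically ordered group. -/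
theorem sbtw_or_sbtw_of_ne {α : Type*} [CircularOrder α] {a b c : α}
    (hab : a ≠ b) (hbc : b ≠ c) (hca : c ≠ a) : sbtw a b c ∨ sbtw a c b := by
  by_contra! h
  have hcba : btw c b a := btw_iff_not_sbtw.2 h.1
  have habc : btw a b c := btw_cyclic_right (btw_iff_not_sbtw.2 h.2)
  rcases habc.antisymm hcba with h | h | h <;> contradiction

-- On a linear order, `sbtw a b c` means `a < b < c` up to cyclic rotation.
attribute [local instance] LinearOrder.toCircularOrder

section LinearOrder

variable {α : Type*} [LinearOrder α] {a b c : α}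

theorem lt_and_lt_of_sbtw_of_lt (h : sbtw a b c) (hac : a < c) : a < b ∧ b < c := by
  rcases h with h | ⟨-, hca⟩ | ⟨hca, -⟩
  · exact h
  · exact absurd hca hac.not_gt
  · exact absurd hca hac.not_gt

theorem StrictMono.sbtw {β : Type*} [LinearOrder β] {f : α → β} (hf : StrictMono f)
    (h : sbtw a b c) : sbtw (f a) (f b) (f c) := by
  rcases h with ⟨h₁, h₂⟩ | ⟨h₁, h₂⟩ | ⟨h₁, h₂⟩
  · exact .inl ⟨hf h₁, hf h₂⟩
  · exact .inr <| .inl ⟨hf h₁, hf h₂⟩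
  · exact .inr <| .inr ⟨hf h₁, hf h₂⟩

end LinearOrder

section Lex

variable {C L : Type*} [LinearOrder L]

def lexRel (R : C → C → C → Prop) (p q s : C × L) : Prop :=
  R p.1 q.1 s.1 ∨
    (p.1 = q.1 ∧ p.1 ≠ s.1 ∧ p.2 < q.2) ∨
    (p.1 ≠ q.1 ∧ q.1 = s.1 ∧ q.2 < s.2) ∨
    (p.1 = s.1 ∧ s.1 ≠ q.1 ∧ s.2 < p.2) ∨
    (p.1 = q.1 ∧ q.1 = s.1 ∧ sbtw p.2 q.2 s.2)

variable {R : C → C → C → Prop} {p q s u : C × L}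

theorem lexRel_rotate (hcyc : ∀ x y z, R x y z → R y z x) (h : lexRel R p q s) :
    lexRel R q s p := by
  rcases h with h | ⟨e, n, l⟩ | ⟨n, e, l⟩ | ⟨e, n, l⟩ | ⟨e₁, e₂, h⟩
  · exact .inl (hcyc _ _ _ h)
  · exact .inr <| .inr <| .inr <| .inl ⟨e.symm, n, l⟩
  · exact .inr <| .inl ⟨e, n.symm, l⟩
  · exact .inr <| .inr <| .inl ⟨n.symm, e.symm, l⟩
  · exact .inr <| .inr <| .inr <| .inr ⟨e₂, (e₁.trans e₂).symm, sbtw_cyclic_left h⟩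

theorem lexRel_ne (hne : ∀ x y z, R x y z → x ≠ y) (h : lexRel R p q s) : p ≠ q := by
  rcases h with h | ⟨-, -, l⟩ | ⟨n, -, -⟩ | ⟨e, n, -⟩ | ⟨-, -, h⟩
  · exact fun hpq => hne _ _ _ h (congrArg Prod.fst hpq)
  · exact fun hpq => l.ne (congrArg Prod.snd hpq)
  · exact fun hpq => n (congrArg Prod.fst hpq)
  · exact fun hpq => n (e.symm.trans (congrArg Prod.fst hpq))
  · exact fun hpq => sbtw_irrefl_left (congrArg Prod.snd hpq ▸ h)

theorem lexRel_total (htot : ∀ x y z, x ≠ y → y ≠ z → z ≠ x → R x y z ∨ R x z y)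
    (hpq : p ≠ q) (hqs : q ≠ s) (hsp : s ≠ p) : lexRel R p q s ∨ lexRel R p s q := by
  have snd_ne {p q : C × L} (hpq : p ≠ q) (e : p.1 = q.1) : p.2 ≠ q.2 :=
    fun e₂ => hpq (Prod.ext e e₂)
  by_cases hab : p.1 = q.1
  · by_cases hbc : q.1 = s.1
    · rcases sbtw_or_sbtw_of_ne (snd_ne hpq hab) (snd_ne hqs hbc) (snd_ne hsp (hab.trans hbc).symm)
        with h | h
      · exact .inl <| .inr <| .inr <| .inr <| .inr ⟨hab, hbc, h⟩
      · exact .inr <| .inr <| .inr <| .inr <| .inr ⟨hab.trans hbc, hbc.symm, h⟩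
    have hac : p.1 ≠ s.1 := hab ▸ hbc
    rcases (snd_ne hpq hab).lt_or_gt with l | l
    · exact .inl <| .inr <| .inl ⟨hab, hac, l⟩
    · exact .inr <| .inr <| .inr <| .inr <| .inl ⟨hab, hbc, l⟩
  by_cases hbc : q.1 = s.1
  · rcases (snd_ne hqs hbc).lt_or_gt with l | l
    · exact .inl <| .inr <| .inr <| .inl ⟨hab, hbc, l⟩
    · exact .inr <| .inr <| .inr <| .inl ⟨hbc ▸ hab, hbc.symm, l⟩
  by_cases hca : s.1 = p.1
  · rcases (snd_ne hsp hca).lt_or_gt with l | l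
    · exact .inl <| .inr <| .inr <| .inr <| .inl ⟨hca.symm, Ne.symm hbc, l⟩
    · exact .inr <| .inr <| .inl ⟨hca.symm, hab, l⟩
  exact (htot _ _ _ hab hbc hca).imp .inl .inl

theorem lexRel_trans (hne : ∀ x y z, R x y z → x ≠ y ∧ y ≠ z ∧ z ≠ x)
    (htrans : ∀ x y z u, R x y z → R y u z → R x u z)
    (h₁ : lexRel R p q s) (h₂ : lexRel R q u s) : lexRel R p u s := by
  obtain ⟨a, x⟩ := p; obtain ⟨b, y⟩ := q; obtain ⟨c, z⟩ := s; obtain ⟨d, w⟩ := u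
  rcases h₁ with h₁ | ⟨rfl, hac, l₁⟩ | ⟨hab, rfl, l₁⟩ | ⟨rfl, hcb, l₁⟩ | ⟨rfl, rfl, h₁⟩
  · rcases h₂ with h₂ | ⟨rfl, -, -⟩ | ⟨-, rfl, l₂⟩ | ⟨hbc, -, -⟩ | ⟨hbd, hdc, -⟩
    · exact .inl (htrans _ _ _ _ h₁ h₂)
    · exact .inl h₁
    · exact .inr <| .inr <| .inl ⟨(hne _ _ _ h₁).2.2.symm, rfl, l₂⟩
    · exact absurd hbc (hne _ _ _ h₁).2.1
    · exact absurd (hbd.trans hdc) (hne _ _ _ h₁).2.1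
  · rcases h₂ with h₂ | ⟨rfl, -, l₂⟩ | ⟨hbd, rfl, l₂⟩ | ⟨hbc, -, -⟩ | ⟨hbd, hdc, -⟩
    · exact .inl h₂
    · exact .inr <| .inl ⟨rfl, hac, l₁.trans l₂⟩
    · exact .inr <| .inr <| .inl ⟨hbd, rfl, l₂⟩
    · exact absurd hbc hac
    · exact absurd (hbd.trans hdc) hac
  · rcases h₂ with h₂ | ⟨-, hbc, -⟩ | ⟨hbd, hdb, -⟩ | ⟨-, -, l₂⟩ | ⟨-, hdc, h₂⟩
    · exact absurd rfl (hne _ _ _ h₂).2.2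
    · exact absurd rfl hbc
    · exact absurd hdb.symm hbd
    · exact absurd l₁ l₂.asymm
    · exact .inr <| .inr <| .inl
        ⟨fun had => hab (had.trans hdc), hdc, (lt_and_lt_of_sbtw_of_lt h₂ l₁).2⟩
  · rcases h₂ with h₂ | ⟨rfl, -, -⟩ | ⟨-, rfl, l₂⟩ | ⟨hbc, -, -⟩ | ⟨hbd, hdc, -⟩
    · exact .inr <| .inr <| .inr <| .inl ⟨rfl, (hne _ _ _ h₂).2.1.symm, l₁⟩
    · exact .inr <| .inr <| .inr <| .inl ⟨rfl, hcb, l₁⟩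
    · exact .inr <| .inr <| .inr <| .inr ⟨rfl, rfl, .inr <| .inl ⟨l₂, l₁⟩⟩
    · exact absurd hbc.symm hcb
    · exact absurd (hbd.trans hdc).symm hcb
  · rcases h₂ with h₂ | ⟨-, hbc, -⟩ | ⟨hbd, hdb, -⟩ | ⟨-, hcd, l₂⟩ | ⟨hbd, hdc, h₂⟩
    · exact absurd rfl (hne _ _ _ h₂).2.2
    · exact absurd rfl hbc
    · exact absurd hdb.symm hbd
    · exact .inr <| .inr <| .inr <| .inl
        ⟨rfl, hcd, (lt_and_lt_of_sbtw_of_lt (sbtw_cyclic_right h₁) l₂).1⟩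
    · exact .inr <| .inr <| .inr <| .inr ⟨hbd, hdc, h₁.trans_left h₂⟩

theorem lexRel_map {C' L' : Type*} [LinearOrder L'] {R' : C' → C' → C' → Prop} {g : C → C'}
    (hg : Function.Injective g) (hR : ∀ x y z, R x y z → R' (g x) (g y) (g z))
    {f : L → L'} (hf : StrictMono f) (h : lexRel R p q s) :
    lexRel R' (Prod.map g f p) (Prod.map g f q) (Prod.map g f s) := by
  rcases h with h | ⟨e, n, l⟩ | ⟨n, e, l⟩ | ⟨e, n, l⟩ | ⟨e₁, e₂, h⟩
  · exact .inl (hR _ _ _ h)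
  · exact .inr <| .inl ⟨congrArg g e, hg.ne n, hf l⟩
  · exact .inr <| .inr <| .inl ⟨hg.ne n, congrArg g e, hf l⟩
  · exact .inr <| .inr <| .inr <| .inl ⟨congrArg g e, hg.ne n, hf l⟩
  · exact .inr <| .inr <| .inr <| .inr ⟨congrArg g e₁, congrArg g e₂, hf.sbtw h⟩

theorem lexRel_mul_mul [Group C] [Group L] [MulLeftStrictMono L] [MulRightStrictMono L]
    (hmul : ∀ x y z u v, R x y z → R (u * x * v) (u * y * v) (u * z * v)) (u v : C × L)
    (h : lexRel R p q s) : lexRel R (u * p * v) (u * q * v) (u * s * v) :=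
  lexRel_map ((mul_left_injective v.1).comp (mul_right_injective u.1)) (hmul · · · u.1 v.1)
    ((strictMono_id.const_mul' u.2).mul_const' v.2) h

end Lex

/-- The lexicographic product of a cyclically ordered group `C` and a totally
ordered group `L` is a cyclically ordered group. -/
theorem lex_product_is_cog {C : Type*} [Group C] (R : C → C → C → Prop)
    (hR : IsCyclicOrder R) (L : Type*) [Group L] [LinearOrder L]
    [CovariantClass L L (· * ·) (· < ·)]
    [CovariantClass L L (Function.swap (· * ·)) (· < ·)] :
    IsCyclicOrder (fun p q s : C × L =>
      R p.1 q.1 s.1 ∨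
      (p.1 = q.1 ∧ p.1 ≠ s.1 ∧ p.2 < q.2) ∨
      (p.1 ≠ q.1 ∧ q.1 = s.1 ∧ q.2 < s.2) ∨
      (p.1 = s.1 ∧ s.1 ≠ q.1 ∧ s.2 < p.2) ∨
      (p.1 = q.1 ∧ q.1 = s.1 ∧
        ((p.2 < q.2 ∧ q.2 < s.2) ∨ (q.2 < s.2 ∧ s.2 < p.2) ∨
          (s.2 < p.2 ∧ p.2 < q.2)))) := by
  show IsCyclicOrder (lexRel R)
  obtain ⟨hne, htot, hcyc, htrans, hmul⟩ := hR
  have hne₁ : ∀ x y z, R x y z → x ≠ y := fun x y z h => (hne x y z h).1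
  refine ⟨fun p q s h => ⟨?_, ?_, ?_⟩, fun _ _ _ => lexRel_total htot,
    fun _ _ _ => lexRel_rotate hcyc, fun _ _ _ _ => lexRel_trans hne htrans,
    fun _ _ _ => lexRel_mul_mul hmul⟩
  · exact lexRel_ne hne₁ h
  · exact lexRel_ne hne₁ (lexRel_rotate hcyc h)
  · exact lexRel_ne hne₁ (lexRel_rotate hcyc (lexRel_rotate hcyc h))
end
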